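/- Let f_1,…,f_N ∈ ℝ be a histogram for the knots x_0 < ⋯ < x_N, set h_i = x_i − x_{i-1}, and assume each q_i is Lipschitz continuous. Suppose there exist y_0, y_N ∈ ℝ such that q_1(x_0) = y_0(1 − α_1), q_N(x_N) = y_N(1 − α_N), and α_{i+1} y_0 + q_{i+1}(x_0) = α_i y_N + q_i(x_N) for i = 1,…,N−1, and suppose ∫_{x_0}^{x_N} q_i(x) dx = (h_i f_i − α_i a_i ∑_{j=1}^N h_j f_j)/a_i for every i = 1,…,N. Then the bounded fractal function f is continuous on I and solves the histopolation problem: ∫_{x_{i-1}}^{x_i} f(x) dx = h_i f_i for every i = 1,…,N. -/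

import Mathlib

/-!
On bounded functions on `I` the operator `T` is a contraction with constant `max |αᵢ| < 1`, and
the join conditions make it map continuous functions with end values `y0`, `yN` to such functions.
Iterating `T` from one of them therefore converges uniformly to its fixed point `f`, which is thus
continuous. Substituting `x = Lᵢ t` in the functional equation gives
`∫_{Iᵢ} f = aᵢ (αᵢ S + ∫_I qᵢ)` with `S = ∫_I f`; with the prescribed `∫_I qᵢ` and summed over `i`
this reads `S - Σ hⱼ fⱼ = (Σ aᵢ αᵢ) (S - Σ hⱼ fⱼ)`. Since `Σ aᵢ αᵢ < Σ aᵢ = 1`, `S = Σ hⱼ fⱼ`,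
and then each piece integral is `hᵢ fᵢ`.
-/

open Set

noncomputable def aC (x : ℕ → ℝ) (N i : ℕ) : ℝ := (x (i + 1) - x i) / (x N - x 0)

noncomputable def bC (x : ℕ → ℝ) (N i : ℕ) : ℝ := (x N * x i - x 0 * x (i + 1)) / (x N - x 0)

/-- The affine map `L i t = a i * t + b i`. -/
noncomputable def Lm (x : ℕ → ℝ) (N i : ℕ) (t : ℝ) : ℝ := aC x N i * t + bC x N i

open MeasureTheory

section Knots

variable {N i : ℕ} {x : ℕ → ℝ}

lemma strictMonoOn_knots (hx : ∀ i, i < N → x i < x (i + 1)) : StrictMonoOn x (Iic N) :=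
  strictMonoOn_Iic_of_lt_succ fun m hm => by simpa using hx m hm

lemma knot_le_knot (hx : ∀ i, i < N → x i < x (i + 1)) {j : ℕ} (hij : i ≤ j) (hj : j ≤ N) :
    x i ≤ x j :=
  (strictMonoOn_knots hx).monotoneOn (mem_Iic.2 (hij.trans hj)) (mem_Iic.2 hj) hij

lemma knot_zero_lt_knot_last (hx : ∀ i, i < N → x i < x (i + 1)) (hN : 0 < N) : x 0 < x N :=
  strictMonoOn_knots hx (Nat.zero_le N) (mem_Iic.2 le_rfl) hN

lemma aC_pos (hi : x i < x (i + 1)) (h0N : x 0 < x N) : 0 < aC x N i :=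
  div_pos (sub_pos.2 hi) (sub_pos.2 h0N)

lemma sum_aC (h0N : x 0 ≠ x N) : ∑ i ∈ Finset.range N, aC x N i = 1 := by
  simp only [aC]
  rw [← Finset.sum_div, Finset.sum_range_sub, div_self (sub_ne_zero.2 h0N.symm)]

lemma Lm_knot_zero (h0N : x 0 ≠ x N) (i : ℕ) : Lm x N i (x 0) = x i := by
  have := sub_ne_zero.2 h0N.symm
  simp only [Lm, aC, bC]
  field_simp
  ring

lemma Lm_knot_last (h0N : x 0 ≠ x N) (i : ℕ) : Lm x N i (x N) = x (i + 1) := by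
  have := sub_ne_zero.2 h0N.symm
  simp only [Lm, aC, bC]
  field_simp
  ring

end Knots

noncomputable def LmInv (x : ℕ → ℝ) (N i : ℕ) (u : ℝ) : ℝ := (u - bC x N i) / aC x N i

section LmInv

variable {N i : ℕ} {x : ℕ → ℝ}

lemma LmInv_Lm (ha : aC x N i ≠ 0) (t : ℝ) : LmInv x N i (Lm x N i t) = t := by
  simp only [LmInv, Lm]
  field_simp
  ring

lemma Lm_LmInv (ha : aC x N i ≠ 0) (u : ℝ) : Lm x N i (LmInv x N i u) = u := by
  simp only [LmInv, Lm]
  field_simp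
  ring

lemma continuous_LmInv : Continuous (LmInv x N i) :=
  (continuous_id.sub continuous_const).div_const _

lemma strictMono_LmInv (ha : 0 < aC x N i) : StrictMono (LmInv x N i) :=
  fun _ _ h => div_lt_div_of_pos_right (sub_lt_sub_right h _) ha

lemma LmInv_knot (hi : x i < x (i + 1)) (h0N : x 0 < x N) : LmInv x N i (x i) = x 0 := by
  rw [← Lm_knot_zero h0N.ne i, LmInv_Lm (aC_pos hi h0N).ne']

lemma LmInv_knot_succ (hi : x i < x (i + 1)) (h0N : x 0 < x N) :
    LmInv x N i (x (i + 1)) = x N := by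
  rw [← Lm_knot_last h0N.ne i, LmInv_Lm (aC_pos hi h0N).ne']

lemma mapsTo_LmInv_Icc (hi : x i < x (i + 1)) (h0N : x 0 < x N) :
    MapsTo (LmInv x N i) (Icc (x i) (x (i + 1))) (Icc (x 0) (x N)) := by
  have := (strictMono_LmInv (aC_pos hi h0N)).monotone.mapsTo_Icc (a := x i) (b := x (i + 1))
  rwa [LmInv_knot hi h0N, LmInv_knot_succ hi h0N] at this

lemma LmInv_mem_Ico (hi : x i < x (i + 1)) (h0N : x 0 < x N) {u : ℝ}
    (hu : u ∈ Ico (x i) (x (i + 1))) : LmInv x N i u ∈ Ico (x 0) (x N) := by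
  have hmono := strictMono_LmInv (aC_pos hi h0N)
  rw [← LmInv_knot hi h0N, ← LmInv_knot_succ hi h0N]
  exact ⟨hmono.monotone hu.1, hmono hu.2⟩

end LmInv

/-- Indices are shifted by one from the paper: `u ∈ [x i, x (i + 1))` (the paper's `I_{i+1}`) gets
index `i`, and `x N` gets the last index `N - 1`. -/
noncomputable def pieceIdx (x : ℕ → ℝ) (N : ℕ) (u : ℝ) : ℕ :=
  Nat.findGreatest (fun i => x i ≤ u) (N - 1)

section PieceIdx

variable {N i : ℕ} {x : ℕ → ℝ} {u : ℝ}

lemma pieceIdx_lt (hN : 0 < N) (u : ℝ) : pieceIdx x N u < N :=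
  (Nat.findGreatest_le _).trans_lt (by omega)

lemma knot_pieceIdx_le (hu : x 0 ≤ u) : x (pieceIdx x N u) ≤ u :=
  Nat.findGreatest_spec (P := fun i => x i ≤ u) (Nat.zero_le _) hu

lemma pieceIdx_eq (hx : ∀ i, i < N → x i < x (i + 1)) (hi : i < N)
    (hu : u ∈ Ico (x i) (x (i + 1))) : pieceIdx x N u = i := by
  have hle : pieceIdx x N u ≤ N - 1 := Nat.findGreatest_le _
  refine le_antisymm ?_ (Nat.le_findGreatest (by omega) hu.1)
  have hlt : x (pieceIdx x N u) < x (i + 1) :=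
    (Nat.findGreatest_spec (P := fun i => x i ≤ u) (m := i) (by omega) hu.1).trans_lt hu.2
  have := ((strictMonoOn_knots hx).lt_iff_lt (mem_Iic.2 (by omega)) (mem_Iic.2 (by omega))).1 hlt
  omega

lemma pieceIdx_knot_last (hx : ∀ i, i < N → x i < x (i + 1)) :
    pieceIdx x N (x N) = N - 1 :=
  le_antisymm (Nat.findGreatest_le _) <|
    Nat.le_findGreatest le_rfl (knot_le_knot hx (Nat.sub_le N 1) le_rfl)

lemma mem_Ico_pieceIdx (hN : 0 < N) (hu : u ∈ Ico (x 0) (x N)) :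
    u ∈ Ico (x (pieceIdx x N u)) (x (pieceIdx x N u + 1)) := by
  refine ⟨knot_pieceIdx_le hu.1, not_le.1 fun h => ?_⟩
  have hlt := pieceIdx_lt (x := x) hN u
  rcases Nat.lt_or_ge (pieceIdx x N u + 1) N with hsucc | hsucc
  · exact Nat.findGreatest_is_greatest (P := fun i => x i ≤ u) (n := N - 1)
      (Nat.lt_succ_self (pieceIdx x N u)) (by omega) h
  · rw [show pieceIdx x N u + 1 = N by omega] at h
    exact (not_le.2 hu.2) h

lemma LmInv_pieceIdx_mem_Icc (hx : ∀ i, i < N → x i < x (i + 1)) (hN : 0 < N)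
    (hu : u ∈ Icc (x 0) (x N)) : LmInv x N (pieceIdx x N u) u ∈ Icc (x 0) (x N) := by
  have h0N := knot_zero_lt_knot_last hx hN
  rcases hu.2.lt_or_eq with hlt | rfl
  · have hmem := mem_Ico_pieceIdx hN ⟨hu.1, hlt⟩
    exact Ico_subset_Icc_self (LmInv_mem_Ico (hx _ (pieceIdx_lt hN u)) h0N hmem)
  · have hlast := mapsTo_LmInv_Icc (hx (N - 1) (by omega)) h0N
    rw [Nat.sub_add_cancel hN] at hlast
    rw [pieceIdx_knot_last hx]
    exact hlast ⟨knot_le_knot hx (Nat.sub_le N 1) le_rfl, le_rfl⟩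

end PieceIdx

lemma continuousOn_Icc_of_pieces {β : Type*} [TopologicalSpace β] {N : ℕ} {x : ℕ → ℝ}
    {f : ℝ → β} (hx : MonotoneOn x (Iic N))
    (hf : ∀ i, i < N → ContinuousOn f (Icc (x i) (x (i + 1)))) :
    ContinuousOn f (Icc (x 0) (x N)) := by
  suffices ∀ n ≤ N, ContinuousOn f (Icc (x 0) (x n)) from this N le_rfl
  intro n hn
  induction n with
  | zero => simp
  | succ n ih =>
    rw [← Icc_union_Icc_eq_Icc (hx (mem_Iic.2 (Nat.zero_le N)) (mem_Iic.2 (by omega)) n.zero_le)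
      (hx (mem_Iic.2 (by omega)) (mem_Iic.2 hn) n.le_succ)]
    exact (ih (by omega)).union_of_isClosed (hf n (by omega)) isClosed_Icc isClosed_Icc

noncomputable def fractalPiece (x : ℕ → ℝ) (N : ℕ) (α : ℕ → ℝ) (q : ℕ → ℝ → ℝ) (g : ℝ → ℝ)
    (i : ℕ) (u : ℝ) : ℝ :=
  α i * g (LmInv x N i u) + q i (LmInv x N i u)

/-- The operator `T` whose fixed point is the fractal function. -/
noncomputable def fractalOp (x : ℕ → ℝ) (N : ℕ) (α : ℕ → ℝ) (q : ℕ → ℝ → ℝ) (g : ℝ → ℝ)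
    (u : ℝ) : ℝ :=
  fractalPiece x N α q g (pieceIdx x N u) u

section FractalOp

variable {N i : ℕ} {x : ℕ → ℝ} {α : ℕ → ℝ} {q : ℕ → ℝ → ℝ} {g : ℝ → ℝ} {u y0 yN : ℝ}

lemma fractalOp_eq_piece (hx : ∀ i, i < N → x i < x (i + 1)) (hi : i < N)
    (hu : u ∈ Ico (x i) (x (i + 1))) : fractalOp x N α q g u = fractalPiece x N α q g i u := by
  rw [fractalOp, pieceIdx_eq hx hi hu]

lemma fractalOp_knot_zero (hx : ∀ i, i < N → x i < x (i + 1)) (hN : 0 < N) :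
    fractalOp x N α q g (x 0) = α 0 * g (x 0) + q 0 (x 0) := by
  rw [fractalOp_eq_piece hx hN ⟨le_rfl, hx 0 hN⟩, fractalPiece,
    LmInv_knot (hx 0 hN) (knot_zero_lt_knot_last hx hN)]

lemma fractalOp_knot_last (hx : ∀ i, i < N → x i < x (i + 1)) (hN : 0 < N) :
    fractalOp x N α q g (x N) = α (N - 1) * g (x N) + q (N - 1) (x N) := by
  have hlast := LmInv_knot_succ (hx (N - 1) (by omega)) (knot_zero_lt_knot_last hx hN)
  rw [Nat.sub_add_cancel hN] at hlast
  rw [fractalOp, pieceIdx_knot_last hx, fractalPiece, hlast]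

lemma eqOn_fractalOp_piece (hx : ∀ i, i < N → x i < x (i + 1))
    (hjoin : ∀ i, i + 1 < N → α (i + 1) * y0 + q (i + 1) (x 0) = α i * yN + q i (x N))
    (hg0 : g (x 0) = y0) (hgN : g (x N) = yN) (hi : i < N) :
    EqOn (fractalOp x N α q g) (fractalPiece x N α q g i) (Icc (x i) (x (i + 1))) := by
  have h0N := knot_zero_lt_knot_last hx (by omega)
  intro u hu
  rcases hu.2.lt_or_eq with hlt | rfl
  · exact fractalOp_eq_piece hx hi ⟨hu.1, hlt⟩
  rcases Nat.lt_or_ge (i + 1) N with hi1 | hi1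
  · rw [fractalOp_eq_piece hx hi1 ⟨le_rfl, hx _ hi1⟩, fractalPiece, fractalPiece,
      LmInv_knot (hx _ hi1) h0N, LmInv_knot_succ (hx i hi) h0N, hg0, hgN]
    exact hjoin i hi1
  · have hidx : pieceIdx x N (x (i + 1)) = i := by
      rw [show i + 1 = N by omega, pieceIdx_knot_last hx]
      omega
    rw [fractalOp, hidx]

lemma continuousOn_fractalPiece (hi : x i < x (i + 1)) (h0N : x 0 < x N)
    (hg : ContinuousOn g (Icc (x 0) (x N))) (hq : ContinuousOn (q i) (Icc (x 0) (x N))) :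
    ContinuousOn (fractalPiece x N α q g i) (Icc (x i) (x (i + 1))) :=
  have hmaps := mapsTo_LmInv_Icc hi h0N
  (continuousOn_const.mul (hg.comp continuous_LmInv.continuousOn hmaps)).add
    (hq.comp continuous_LmInv.continuousOn hmaps)

lemma mapsTo_fractalOp (hx : ∀ i, i < N → x i < x (i + 1)) (hN : 0 < N)
    (hq : ∀ i, i < N → ContinuousOn (q i) (Icc (x 0) (x N)))
    (hj0 : q 0 (x 0) = y0 * (1 - α 0))
    (hjN : q (N - 1) (x N) = yN * (1 - α (N - 1)))
    (hjoin : ∀ i, i + 1 < N → α (i + 1) * y0 + q (i + 1) (x 0) = α i * yN + q i (x N)) :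
    MapsTo (fractalOp x N α q)
      {g | ContinuousOn g (Icc (x 0) (x N)) ∧ g (x 0) = y0 ∧ g (x N) = yN}
      {g | ContinuousOn g (Icc (x 0) (x N)) ∧ g (x 0) = y0 ∧ g (x N) = yN} := by
  rintro g ⟨hg, hg0, hgN⟩
  have h0N := knot_zero_lt_knot_last hx hN
  refine ⟨continuousOn_Icc_of_pieces (strictMonoOn_knots hx).monotoneOn fun i hi =>
    (continuousOn_fractalPiece (hx i hi) h0N hg (hq i hi)).congr
      (eqOn_fractalOp_piece hx hjoin hg0 hgN hi), ?_, ?_⟩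
  · rw [fractalOp_knot_zero hx hN, hg0, hj0]
    ring
  · rw [fractalOp_knot_last hx hN, hgN, hjN]
    ring

lemma abs_fractalOp_sub_le (hx : ∀ i, i < N → x i < x (i + 1)) (hN : 0 < N) {k ε : ℝ}
    (hk : ∀ i, i < N → |α i| ≤ k) {h : ℝ → ℝ}
    (hε : ∀ t ∈ Icc (x 0) (x N), |g t - h t| ≤ ε) :
    ∀ u ∈ Icc (x 0) (x N), |fractalOp x N α q g u - fractalOp x N α q h u| ≤ k * ε := by
  intro u hu
  have hi := pieceIdx_lt (x := x) hN u
  set t := LmInv x N (pieceIdx x N u) u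
  have hdiff :
      fractalOp x N α q g u - fractalOp x N α q h u = α (pieceIdx x N u) * (g t - h t) := by
    simp only [fractalOp, fractalPiece, t]
    ring
  rw [hdiff, abs_mul]
  exact mul_le_mul (hk _ hi) (hε _ (LmInv_pieceIdx_mem_Icc hx hN hu)) (abs_nonneg _)
    ((abs_nonneg _).trans (hk _ hi))

lemma eqOn_fractalOp_self {f : ℝ → ℝ} (hx : ∀ i, i < N → x i < x (i + 1)) (hN : 0 < N)
    (hfe : ∀ i, i < N → ∀ t ∈ Ico (x 0) (x N), f (Lm x N i t) = α i * f t + q i t)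
    (hfeN : f (Lm x N (N - 1) (x N)) = α (N - 1) * f (x N) + q (N - 1) (x N)) :
    EqOn f (fractalOp x N α q f) (Icc (x 0) (x N)) := by
  have h0N := knot_zero_lt_knot_last hx hN
  intro u hu
  rcases hu.2.lt_or_eq with hlt | rfl
  · have hi := pieceIdx_lt (x := x) hN u
    have hfu := hfe _ hi _ (LmInv_mem_Ico (hx _ hi) h0N (mem_Ico_pieceIdx hN ⟨hu.1, hlt⟩))
    rwa [Lm_LmInv (aC_pos (hx _ hi) h0N).ne'] at hfu
  · have hLN : Lm x N (N - 1) (x N) = x N := by rw [Lm_knot_last h0N.ne, Nat.sub_add_cancel hN]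
    rw [fractalOp_knot_last hx hN]
    rwa [hLN] at hfeN

lemma abs_sub_iterate_fractalOp_le {f : ℝ → ℝ} (hx : ∀ i, i < N → x i < x (i + 1)) (hN : 0 < N)
    {k ε : ℝ} (hk : ∀ i, i < N → |α i| ≤ k) (hf : EqOn f (fractalOp x N α q f) (Icc (x 0) (x N)))
    (hε : ∀ t ∈ Icc (x 0) (x N), |f t - g t| ≤ ε) (n : ℕ) :
    ∀ u ∈ Icc (x 0) (x N), |f u - (fractalOp x N α q)^[n] g u| ≤ k ^ n * ε := by
  induction n with
  | zero => simpa using hε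
  | succ n ih =>
    intro u hu
    rw [hf hu, Function.iterate_succ_apply', pow_succ', mul_assoc]
    exact abs_fractalOp_sub_le hx hN hk ih u hu

end FractalOp

lemma continuousOn_of_abs_sub_le_geometric {X : Type*} [TopologicalSpace X] {s : Set X}
    {f : X → ℝ} {G : ℕ → X → ℝ} {k C : ℝ} (hk0 : 0 ≤ k) (hk1 : k < 1)
    (hG : ∀ n, ContinuousOn (G n) s) (hfG : ∀ n, ∀ u ∈ s, |f u - G n u| ≤ k ^ n * C) :
    ContinuousOn f s := by
  have hlim : Filter.Tendsto (fun n => k ^ n * C) Filter.atTop (nhds 0) := by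
    simpa using (tendsto_pow_atTop_nhds_zero_of_lt_one hk0 hk1).mul_const C
  refine TendstoUniformlyOn.continuousOn (F := G) (p := Filter.atTop) ?_
    (Filter.Frequently.of_forall hG)
  rw [Metric.tendstoUniformlyOn_iff]
  intro ε hε
  filter_upwards [hlim.eventually_lt_const hε] with n hn u hu
  exact (Real.dist_eq _ _ ▸ hfG n u hu).trans_lt hn

lemma exists_abs_le_lt_one {N : ℕ} {α : ℕ → ℝ} (hN : 0 < N) (hα : ∀ i, i < N → |α i| < 1) :
    ∃ k, 0 ≤ k ∧ k < 1 ∧ ∀ i, i < N → |α i| ≤ k := by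
  obtain ⟨i₀, hi₀, hmax⟩ :=
    (Finset.range N).exists_max_image (fun i => |α i|) ⟨0, Finset.mem_range.2 hN⟩
  exact ⟨|α i₀|, abs_nonneg _, hα i₀ (Finset.mem_range.1 hi₀),
    fun i hi => hmax i (Finset.mem_range.2 hi)⟩

lemma exists_continuous_eq_eq {a b : ℝ} (hab : a ≠ b) (ya yb : ℝ) :
    ∃ g : ℝ → ℝ, Continuous g ∧ g a = ya ∧ g b = yb :=
  ⟨fun u => ya + (yb - ya) * ((u - a) / (b - a)), by fun_prop, by simp, by
    simp [div_self (sub_ne_zero.2 hab.symm)]⟩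

theorem continuousOn_of_eqOn_fractalOp {N : ℕ} {x α : ℕ → ℝ} {q : ℕ → ℝ → ℝ} {f : ℝ → ℝ}
    {y0 yN : ℝ} (hx : ∀ i, i < N → x i < x (i + 1)) (hN : 0 < N)
    (hα : ∀ i, i < N → |α i| < 1) (hq : ∀ i, i < N → ContinuousOn (q i) (Icc (x 0) (x N)))
    (hj0 : q 0 (x 0) = y0 * (1 - α 0))
    (hjN : q (N - 1) (x N) = yN * (1 - α (N - 1)))
    (hjoin : ∀ i, i + 1 < N → α (i + 1) * y0 + q (i + 1) (x 0) = α i * yN + q i (x N))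
    (hfb : ∃ M, ∀ t ∈ Icc (x 0) (x N), |f t| ≤ M)
    (hf : EqOn f (fractalOp x N α q f) (Icc (x 0) (x N))) :
    ContinuousOn f (Icc (x 0) (x N)) := by
  obtain ⟨k, hk0, hk1, hk⟩ := exists_abs_le_lt_one hN hα
  obtain ⟨g, hgc, hg0, hgN⟩ := exists_continuous_eq_eq (knot_zero_lt_knot_last hx hN).ne y0 yN
  obtain ⟨M, hM⟩ := hfb
  obtain ⟨M', hM'⟩ := (isCompact_Icc (a := x 0) (b := x N)).exists_bound_of_continuousOn
    hgc.continuousOn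
  have hiter := (mapsTo_fractalOp hx hN hq hj0 hjN hjoin).iterate
  refine continuousOn_of_abs_sub_le_geometric hk0 hk1
    (fun n => (hiter n ⟨hgc.continuousOn, hg0, hgN⟩).1)
    (abs_sub_iterate_fractalOp_le hx hN hk hf (ε := M + M') fun t ht => ?_)
  calc |f t - g t| ≤ |f t| + |g t| := abs_sub _ _
    _ ≤ M + M' := add_le_add (hM t ht) (hM' t ht)

lemma integral_knot_piece {N i : ℕ} {x : ℕ → ℝ} {f p : ℝ → ℝ} {β : ℝ}
    (hi : x i < x (i + 1)) (h0N : x 0 < x N)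
    (hf : IntervalIntegrable f volume (x 0) (x N)) (hp : IntervalIntegrable p volume (x 0) (x N))
    (hfe : ∀ t ∈ Ico (x 0) (x N), f (Lm x N i t) = β * f t + p t) :
    ∫ t in (x i)..(x (i + 1)), f t =
      aC x N i * (β * (∫ t in (x 0)..(x N), f t) + ∫ t in (x 0)..(x N), p t) := by
  have ha := aC_pos hi h0N
  have hcov := intervalIntegral.integral_comp_mul_add (a := x 0) (b := x N) f ha.ne' (bC x N i)
  have hends : ∀ t, aC x N i * t + bC x N i = Lm x N i t := fun _ => rfl
  simp only [hends, Lm_knot_zero h0N.ne, Lm_knot_last h0N.ne] at hcov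
  have hae : ∫ t in (x 0)..(x N), f (Lm x N i t) = ∫ t in (x 0)..(x N), (β * f t + p t) := by
    refine intervalIntegral.integral_congr_ae ?_
    filter_upwards [Measure.ae_ne volume (x N)] with t htN ht
    rw [uIoc_of_le h0N.le] at ht
    exact hfe t ⟨ht.1.le, ht.2.lt_of_ne htN⟩
  rw [hae, intervalIntegral.integral_add (hf.const_mul β) hp, intervalIntegral.integral_const_mul,
    smul_eq_mul] at hcov
  rw [hcov, mul_inv_cancel_left₀ ha.ne']

lemma sum_aC_mul_lt_one {N : ℕ} {x α : ℕ → ℝ} (hx : ∀ i, i < N → x i < x (i + 1)) (hN : 0 < N)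
    (hα : ∀ i, i < N → α i < 1) : ∑ i ∈ Finset.range N, aC x N i * α i < 1 := by
  have h0N := knot_zero_lt_knot_last hx hN
  calc ∑ i ∈ Finset.range N, aC x N i * α i < ∑ i ∈ Finset.range N, aC x N i :=
        Finset.sum_lt_sum_of_nonempty ⟨0, Finset.mem_range.2 hN⟩ fun i hi =>
          mul_lt_of_lt_one_right (aC_pos (hx i (Finset.mem_range.1 hi)) h0N)
            (hα i (Finset.mem_range.1 hi))
    _ = 1 := sum_aC h0N.ne

lemma histopolation_of_integral_knot_piece {N : ℕ} {x α c : ℕ → ℝ} {f : ℝ → ℝ}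
    (hx : ∀ i, i < N → x i < x (i + 1)) (hN : 0 < N) (hα : ∀ i, i < N → α i < 1)
    (hf : ∀ i, i < N → IntervalIntegrable f volume (x i) (x (i + 1)))
    (hpiece : ∀ i, i < N → ∫ t in (x i)..(x (i + 1)), f t =
      aC x N i * α i * ((∫ t in (x 0)..(x N), f t) -
        ∑ j ∈ Finset.range N, (x (j + 1) - x j) * c j) + (x (i + 1) - x i) * c i) :
    ∀ i, i < N → ∫ t in (x i)..(x (i + 1)), f t = (x (i + 1) - x i) * c i := by
  set S := ∫ t in (x 0)..(x N), f t
  set Sc := ∑ j ∈ Finset.range N, (x (j + 1) - x j) * c j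
  set A := ∑ i ∈ Finset.range N, aC x N i * α i
  have hfixed : S - Sc = A * (S - Sc) := by
    calc S - Sc = (∑ i ∈ Finset.range N, ∫ t in (x i)..(x (i + 1)), f t) - Sc := by
          rw [intervalIntegral.sum_integral_adjacent_intervals hf]
      _ = (∑ i ∈ Finset.range N, (aC x N i * α i * (S - Sc) + (x (i + 1) - x i) * c i)) - Sc := by
          rw [Finset.sum_congr rfl fun i hi => hpiece i (Finset.mem_range.1 hi)]
      _ = A * (S - Sc) := by
          rw [Finset.sum_add_distrib, ← Finset.sum_mul]
          ring
  have hS : S - Sc = 0 := by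
    have hA : 1 - A ≠ 0 := (sub_pos.2 (sum_aC_mul_lt_one hx hN hα)).ne'
    exact (mul_eq_zero.1 (by linear_combination hfixed : (1 - A) * (S - Sc) = 0)).resolve_left hA
  intro i hi
  rw [hpiece i hi, hS, mul_zero, zero_add]

/-- If the `q i` satisfy the continuity (join-up) conditions for some `y0, yN` and the
histopolation integral conditions, then the bounded fractal function is continuous on `I`
and solves the histopolation problem. -/
theorem stmt19
    (N : ℕ) (hN : 2 ≤ N)
    (x : ℕ → ℝ)
    (hx : ∀ i, i < N → x i < x (i + 1))
    (α : ℕ → ℝ) (hα : ∀ i, i < N → |α i| < 1)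
    (q : ℕ → ℝ → ℝ)
    (hq : ∀ i, i < N → ∃ C, ∀ u ∈ Icc (x 0) (x N), ∀ v ∈ Icc (x 0) (x N),
      |q i u - q i v| ≤ C * |u - v|)
    (f : ℝ → ℝ)
    (hfb : ∃ M, ∀ t ∈ Icc (x 0) (x N), |f t| ≤ M)
    (hfe : ∀ i, i < N → ∀ t ∈ Ico (x 0) (x N), f (Lm x N i t) = α i * f t + q i t)
    (hfeN : f (Lm x N (N - 1) (x N)) = α (N - 1) * f (x N) + q (N - 1) (x N))
    (c : ℕ → ℝ)
    (y0 yN : ℝ)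
    (hj0 : q 0 (x 0) = y0 * (1 - α 0))
    (hjN : q (N - 1) (x N) = yN * (1 - α (N - 1)))
    (hjoin : ∀ i, i + 1 < N → α (i + 1) * y0 + q (i + 1) (x 0) = α i * yN + q i (x N))
    (hint : ∀ i, i < N → ∫ t in (x 0)..(x N), q i t =
      ((x (i + 1) - x i) * c i -
        α i * aC x N i * ∑ j ∈ Finset.range N, (x (j + 1) - x j) * c j) / aC x N i) :
    ContinuousOn f (Icc (x 0) (x N)) ∧
    ∀ i, i < N → ∫ t in (x i)..(x (i + 1)), f t = (x (i + 1) - x i) * c i := by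
  have hN0 : 0 < N := by omega
  have h0N := knot_zero_lt_knot_last hx hN0
  have hqc : ∀ i, i < N → ContinuousOn (q i) (Icc (x 0) (x N)) := fun i hi => by
    obtain ⟨C, hC⟩ := hq i hi
    exact (LipschitzOnWith.of_dist_le' fun u hu v hv => by
      simpa only [Real.dist_eq] using hC u hu v hv).continuousOn
  have hcont : ContinuousOn f (Icc (x 0) (x N)) := continuousOn_of_eqOn_fractalOp hx hN0 hα hqc
    hj0 hjN hjoin hfb (eqOn_fractalOp_self hx hN0 hfe hfeN)
  have hpiece : ∀ i, i < N → IntervalIntegrable f volume (x i) (x (i + 1)) := fun i hi =>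
    (hcont.mono (Icc_subset_Icc (knot_le_knot hx i.zero_le hi.le) (knot_le_knot hx hi le_rfl))
      ).intervalIntegrable_of_Icc (hx i hi).le
  refine ⟨hcont, histopolation_of_integral_knot_piece hx hN0
    (fun i hi => (le_abs_self _).trans_lt (hα i hi)) hpiece fun i hi => ?_⟩
  rw [integral_knot_piece (hx i hi) h0N (hcont.intervalIntegrable_of_Icc h0N.le)
    ((hqc i hi).intervalIntegrable_of_Icc h0N.le) (hfe i hi), hint i hi]
  field_simp [(aC_pos (hx i hi) h0N).ne']
  ring
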